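/- For any well-founded extensional APG X with carrier in Type u, there exists a well-founded extensional APG Z with carrier in Type u such that for every well-founded extensional APG W with carrier in Type u, W ⋲ Z holds if and only if there exists a well-founded extensional APG V with carrier in Type u such that V ⋲ X and W ⋲ V. (The union axiom holds in the class of well-founded extensional APGs.) -/

import Mathlib

/-!
Up to isomorphism the members of the union are the slices `X.slice g` at the grandchildren `g`
of the root. Any family `{X.slice s | s ∈ S}` of slices of a well-founded extensional APG is the
family of members of a well-founded extensional APG: if some node `z` has exactly the children
`S`, take `X.slice z`; otherwise adjoin a fresh root above `S` to the part of `X` lying below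
`S`, which stays extensional precisely because no old node has the same children as the new root.
Since an initial-segment embedding carries slices isomorphically onto slices, the slices of the
new graph below the fresh root are those of `X`.
-/

universe u

/-- An accessible pointed graph (APG): a type with a binary relation and a root from
which every node is reachable (backwards along `Relation.ReflTransGen`). -/
structure APG : Type (u + 1) where
  carrier : Type u
  rel : carrier → carrier → Prop
  pt : carrier
  acc : ∀ z : carrier, Relation.ReflTransGen rel z pt

/-- An APG is well-founded if its relation is. -/
def APG.WF (X : APG.{u}) : Prop := WellFounded X.rel

/-- An APG is extensional if its relation is. -/
def APG.Ext (X : APG.{u}) : Prop :=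
  ∀ x y : X.carrier, (∀ z, X.rel z x ↔ X.rel z y) → x = y

/-- Isomorphism of APGs: a relation isomorphism preserving the root. -/
def APG.Iso (X Y : APG.{u}) : Prop :=
  ∃ e : X.rel ≃r Y.rel, e X.pt = Y.pt

private theorem APG.slice_acc {α : Type u} (r : α → α → Prop) (y : α)
    (z : {w : α // Relation.ReflTransGen r w y}) :
    Relation.ReflTransGen (fun a b : {w : α // Relation.ReflTransGen r w y} => r a.1 b.1)
      z ⟨y, Relation.ReflTransGen.refl⟩ := by
  obtain ⟨a, h⟩ := z
  induction h using Relation.ReflTransGen.head_induction_on with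
  | refl => exact Relation.ReflTransGen.refl
  | head h' h ih => exact Relation.ReflTransGen.head h' ih

/-- The sub-APG of `Y` determined by a node `y`: the nodes admitting a path to `y`,
rooted at `y`. -/
def APG.slice (Y : APG.{u}) (y : Y.carrier) : APG.{u} where
  carrier := {z : Y.carrier // Relation.ReflTransGen Y.rel z y}
  rel a b := Y.rel a.1 b.1
  pt := ⟨y, Relation.ReflTransGen.refl⟩
  acc z := APG.slice_acc Y.rel y z

/-- Membership of APGs: `X ⋲ Y` iff `X` is isomorphic to `Y.slice y` for some member
(child of the root) `y` of `Y`. -/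
def APG.Mem (X Y : APG.{u}) : Prop :=
  ∃ y : Y.carrier, Y.rel y Y.pt ∧ APG.Iso X (Y.slice y)

open Relation

theorem InitialSeg.exists_eq_of_reflTransGen {α β : Type*} {r : α → α → Prop}
    {s : β → β → Prop} (f : InitialSeg r s) {a : α} {b : β} (h : ReflTransGen s b (f a)) :
    ∃ a', ReflTransGen r a' a ∧ f a' = b := by
  induction h using ReflTransGen.head_induction_on with
  | refl => exact ⟨a, .refl, rfl⟩
  | head hbc _ ih =>
    obtain ⟨c, hca, rfl⟩ := ih
    obtain ⟨b, rfl⟩ := f.mem_range_of_rel hbc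
    exact ⟨b, .head (f.map_rel_iff.mp hbc) hca, rfl⟩

theorem Relation.ReflTransGen.subtype {α : Type*} {r : α → α → Prop} {p : α → Prop}
    (hp : ∀ a b, r a b → p b → p a) {a b : α} (h : ReflTransGen r a b) (ha : p a)
    (hb : p b) :
    ReflTransGen (fun x y : Subtype p => r x y) ⟨a, ha⟩ ⟨b, hb⟩ := by
  induction h with
  | refl => exact .refl
  | tail _ hcb ih => exact .tail (ih (hp _ _ hcb hb)) hcb

namespace APG

variable {A B C W X : APG.{u}}

theorem Iso.refl (A : APG.{u}) : Iso A A := ⟨RelIso.refl _, rfl⟩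

theorem Iso.symm : Iso A B → Iso B A
  | ⟨e, he⟩ => ⟨e.symm, by rw [← he, e.symm_apply_apply]⟩

theorem Iso.trans : Iso A B → Iso B C → Iso A C
  | ⟨e, he⟩, ⟨f, hf⟩ => ⟨e.trans f, by rw [RelIso.trans_apply, he, hf]⟩

theorem WF.slice (h : X.WF) (x : X.carrier) : (X.slice x).WF :=
  InvImage.wf Subtype.val h

theorem Ext.slice (h : X.Ext) (x : X.carrier) : (X.slice x).Ext := fun a b hab =>
  Subtype.ext <| h _ _ fun w =>
    ⟨fun hw => (hab ⟨w, .head hw a.2⟩).mp hw, fun hw => (hab ⟨w, .head hw b.2⟩).mpr hw⟩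

theorem iso_slice_of_initialSeg (f : InitialSeg A.rel B.rel) (a : A.carrier) :
    Iso (A.slice a) (B.slice (f a)) := by
  let g : (A.slice a).carrier → (B.slice (f a)).carrier :=
    fun z => ⟨f z.1, z.2.lift f fun _ _ => f.map_rel_iff.mpr⟩
  have hg : Function.Bijective g := by
    refine ⟨fun z w hzw => Subtype.ext (f.inj.mp (congrArg Subtype.val hzw)), fun w => ?_⟩
    obtain ⟨z, hz, hzw⟩ := f.exists_eq_of_reflTransGen w.2
    exact ⟨⟨z, hz⟩, Subtype.ext hzw⟩
  exact ⟨⟨Equiv.ofBijective g hg, f.map_rel_iff⟩, rfl⟩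

theorem iso_slice_slice (X : APG.{u}) (x : X.carrier) (y : (X.slice x).carrier) :
    Iso ((X.slice x).slice y) (X.slice y.1) :=
  iso_slice_of_initialSeg (A := X.slice x) (B := X)
    { toFun := Subtype.val
      inj' := Subtype.val_injective
      map_rel_iff' := Iff.rfl
      mem_range_of_rel' := fun a b h => ⟨⟨b, .head h a.2⟩, rfl⟩ } y

theorem Mem.trans_iso (hW : Mem W A) (hAB : Iso A B) : Mem W B :=
  let ⟨a, ha, hWa⟩ := hW
  let ⟨e, he⟩ := hAB
  ⟨e a, he ▸ e.map_rel_iff.mpr ha, hWa.trans (iso_slice_of_initialSeg e.toInitialSeg a)⟩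

theorem mem_slice_iff (X : APG.{u}) (x : X.carrier) :
    Mem W (X.slice x) ↔ ∃ y, X.rel y x ∧ Iso W (X.slice y) := by
  constructor
  · rintro ⟨y, hyx, hWy⟩
    exact ⟨y.1, hyx, hWy.trans (iso_slice_slice X x y)⟩
  · rintro ⟨y, hyx, hWy⟩
    exact ⟨⟨y, .single hyx⟩, hyx, hWy.trans (iso_slice_slice X x ⟨y, _⟩).symm⟩

variable {S : Set X.carrier}

def below (X : APG.{u}) (S : Set X.carrier) : Set X.carrier :=
  {z | ∃ s ∈ S, ReflTransGen X.rel z s}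

theorem self_mem_below {s : X.carrier} (hs : s ∈ S) : s ∈ X.below S :=
  ⟨s, hs, .refl⟩

theorem mem_below_of_reflTransGen {a b : X.carrier} (h : ReflTransGen X.rel a b)
    (hb : b ∈ X.below S) : a ∈ X.below S :=
  let ⟨s, hs, hbs⟩ := hb
  ⟨s, hs, h.trans hbs⟩

theorem mem_below_of_rel {a b : X.carrier} (h : X.rel a b) (hb : b ∈ X.below S) :
    a ∈ X.below S :=
  mem_below_of_reflTransGen (.single h) hb

/-- `none` is a fresh root whose children are the nodes of `S`. -/
def collectRel (X : APG.{u}) (S : Set X.carrier) :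
    Option (X.below S) → Option (X.below S) → Prop
  | some a, some b => X.rel a b
  | some a, none => a.1 ∈ S
  | none, _ => False

abbrev collect (X : APG.{u}) (S : Set X.carrier) : APG.{u} where
  carrier := Option (X.below S)
  rel := collectRel X S
  pt := none
  acc
    | none => .refl
    | some ⟨_, s, hs, hzs⟩ =>
      have hzs' := hzs.subtype (p := (· ∈ X.below S)) (fun _ _ => mem_below_of_rel) _
        (self_mem_below hs)
      (hzs'.lift some fun _ _ h => h).tail (show collectRel X S (some ⟨s, _⟩) none from hs)

theorem WF.collect (h : X.WF) (S : Set X.carrier) : (X.collect S).WF := by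
  have hsome (a : X.below S) : Acc (collectRel X S) (some a) :=
    (InvImage.wf Subtype.val h).induction (C := fun a => Acc (collectRel X S) (some a)) a
      fun a ih => Acc.intro _ fun
      | some b, hb => ih b hb
      | none, hb => hb.elim
  exact ⟨fun
    | some a => hsome a
    | none => Acc.intro _ fun
      | some b, _ => hsome b
      | none, hb => hb.elim⟩

theorem Ext.collect (h : X.Ext) (hS : ∀ z, {w | X.rel w z} ≠ S) : (X.collect S).Ext := by
  have not_root (a : X.below S) (ha : ∀ z, collectRel X S z (some a) ↔ collectRel X S z none) :
      False :=
    hS a.1 <| Set.ext fun w =>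
      ⟨fun hw => (ha (some ⟨w, mem_below_of_rel hw a.2⟩)).mp hw,
        fun hw => (ha (some ⟨w, self_mem_below hw⟩)).mpr hw⟩
  rintro (_ | a) (_ | b) hab
  · rfl
  · exact (not_root b fun z => (hab z).symm).elim
  · exact (not_root a hab).elim
  · refine congrArg some (Subtype.ext (h _ _ fun w => ⟨fun hw => ?_, fun hw => ?_⟩))
    · exact (hab (some ⟨w, mem_below_of_rel hw a.2⟩)).mp hw
    · exact (hab (some ⟨w, mem_below_of_rel hw b.2⟩)).mpr hw

theorem iso_collect_slice (X : APG.{u}) (S : Set X.carrier) (p : X.below S) :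
    Iso ((X.collect S).slice (some p)) (X.slice p.1) :=
  (iso_slice_of_initialSeg (A := X.slice p.1) (B := X.collect S)
    { toFun := fun z => some ⟨z.1, mem_below_of_reflTransGen z.2 p.2⟩
      inj' := fun _ _ h => Subtype.ext (by simpa using h)
      map_rel_iff' := Iff.rfl
      mem_range_of_rel' := fun
        | z, some q, h => ⟨⟨q.1, .head h z.2⟩, rfl⟩
        | _, none, h => h.elim } (X.slice p.1).pt).symm.trans
    (iso_slice_slice X p.1 (X.slice p.1).pt)

theorem mem_collect_iff : Mem W (X.collect S) ↔ ∃ s ∈ S, Iso W (X.slice s) := by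
  constructor
  · rintro ⟨_ | p, hp, hW⟩
    · exact hp.elim
    · exact ⟨p.1, hp, hW.trans (iso_collect_slice X S p)⟩
  · rintro ⟨s, hs, hW⟩
    exact ⟨some ⟨s, self_mem_below hs⟩, hs,
      hW.trans (iso_collect_slice X S ⟨s, _⟩).symm⟩

theorem exists_mem_iff_iso_slice (hw : X.WF) (he : X.Ext) (S : Set X.carrier) :
    ∃ Z : APG.{u}, Z.WF ∧ Z.Ext ∧ ∀ W, Mem W Z ↔ ∃ s ∈ S, Iso W (X.slice s) := by
  by_cases hS : ∃ z, {w | X.rel w z} = S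
  · obtain ⟨z, rfl⟩ := hS
    exact ⟨X.slice z, hw.slice z, he.slice z, fun W => mem_slice_iff X z⟩
  · simp only [not_exists] at hS
    exact ⟨X.collect S, hw.collect S, he.collect hS, fun W => mem_collect_iff⟩

theorem exists_mem_mem_iff (hw : X.WF) (he : X.Ext) :
    (∃ V : APG.{u}, V.WF ∧ V.Ext ∧ Mem V X ∧ Mem W V) ↔
      ∃ v, X.rel v X.pt ∧ Mem W (X.slice v) := by
  constructor
  · rintro ⟨V, -, -, ⟨v, hv, hV⟩, hWV⟩
    exact ⟨v, hv, hWV.trans_iso hV⟩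
  · rintro ⟨v, hv, hW⟩
    exact ⟨X.slice v, hw.slice v, he.slice v, ⟨v, hv, .refl _⟩, hW⟩

end APG

/-- Union for well-founded extensional APGs. -/
theorem apg_union (X : APG.{u}) (hXw : X.WF) (hXe : X.Ext) :
    ∃ Z : APG.{u}, Z.WF ∧ Z.Ext ∧
      ∀ W : APG.{u}, W.WF → W.Ext →
        (APG.Mem W Z ↔ ∃ V : APG.{u}, V.WF ∧ V.Ext ∧ APG.Mem V X ∧ APG.Mem W V) := by
  obtain ⟨Z, hZw, hZe, hZ⟩ :=
    APG.exists_mem_iff_iso_slice hXw hXe {g | ∃ v, X.rel g v ∧ X.rel v X.pt}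
  refine ⟨Z, hZw, hZe, fun W _ _ => ?_⟩
  rw [hZ, APG.exists_mem_mem_iff hXw hXe]
  constructor
  · rintro ⟨g, ⟨v, hgv, hv⟩, hW⟩
    exact ⟨v, hv, (APG.mem_slice_iff X v).mpr ⟨g, hgv, hW⟩⟩
  · rintro ⟨v, hv, hW⟩
    obtain ⟨g, hgv, hW⟩ := (APG.mem_slice_iff X v).mp hW
    exact ⟨g, ⟨v, hgv, hv⟩, hW⟩
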